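/- arXiv:1509.03016 — 6 statements merged into one kernel-verified Lean document; each statement's English description precedes it below -/
import Mathlib

section
/- Independence is preserved under removal of attributes: if Y is an independent partition of S with respect to R, and X is a family of sets each contained in a distinct block of Y, then X is an independent partition of ∪X with respect to the projection R|_{∪X}. -/
variable {ι : Type*} {V : ι → Type*}

def IsRelation (R : Set (∀ a, V a)) : Prop :=
  R.Nonempty ∧ ∀ (a : ι) (v : V a), ∃ t ∈ R, t a = v

def Correlated (R : Set (∀ a, V a)) (T : Set ι) : Prop :=
  ∃ g : ∀ a, V a, (∀ a ∈ T, ∃ t ∈ R, t a = g a) ∧ ∀ t ∈ R, ∃ a ∈ T, t a ≠ g a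

def Mincor (R : Set (∀ a, V a)) (T : Set ι) : Prop :=
  Correlated R T ∧ ∀ T' ⊆ T, Correlated R T' → T' = T

def MF (R : Set (∀ a, V a)) : Set (Set ι) :=
  {T | Mincor R T} ∪ {T | ∃ a : ι, T = {a} ∧ ∀ T', Mincor R T' → a ∉ T'}

def Independent (R : Set (∀ a, V a)) (X : Set (Set ι)) : Prop :=
  R = {g | ∀ Y ∈ X, ∃ t ∈ R, ∀ a ∈ Y, t a = g a}

def projT (R : Set (∀ a, V a)) (T : Set ι) : Set ((a : T) → V a) :=
  (fun t (a : T) => t a) '' R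

def quotRel (R : Set (∀ a, V a)) (X : Set (Set ι)) :
    Set ((Y : X) → (a : (Y : Set ι)) → V a) :=
  (fun t (Y : X) (a : (Y : Set ι)) => t a) '' R

def Refines (P Q : Set (Set ι)) : Prop := ∀ B ∈ P, ∃ C ∈ Q, B ⊆ C

def ccBlock (F : Set (Set ι)) (a : ι) : Set ι :=
  {b | Relation.EqvGen (fun x y => ∃ T ∈ F, x ∈ T ∧ y ∈ T) a b}

def alphaT (R : Set (∀ a, V a)) (X : Set (Set ι)) : Set (Set ι) :=
  Set.range (fun Y : X => ⋃ Z ∈ ccBlock (MF (quotRel R X)) Y, (Z : Set ι))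

theorem stmt10 [Fintype ι] [∀ a, Fintype (V a)]
    (R : Set (∀ a, V a)) (hR : IsRelation R)
    (Y : Set (Set ι)) (hY : Setoid.IsPartition Y) (hYind : Independent R Y)
    (X : Set (Set ι))
    (hXne : ∀ B ∈ X, B.Nonempty)
    (hXsub : ∀ B ∈ X, ∃ W ∈ Y, B ⊆ W)
    (hXone : ∀ W ∈ Y, ∀ B ∈ X, ∀ B' ∈ X, B ⊆ W → B' ⊆ W → B = B') :
    Independent (projT R (⋃₀ X))
      ((fun B => {a : (⋃₀ X : Set ι) | (a : ι) ∈ B}) '' X) := by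
  classical
  obtain ⟨⟨r0, hr0⟩, -⟩ := hR
  apply Set.eq_of_subset_of_subset
  · rintro _ ⟨t, ht, rfl⟩ _ ⟨B, hB, rfl⟩
    exact ⟨_, ⟨t, ht, rfl⟩, fun a _ => rfl⟩
  · intro g hg
    have key : ∀ B ∈ X, ∃ r ∈ R, ∀ a : (⋃₀ X : Set ι), (a : ι) ∈ B → r a = g a := by
      intro B hB
      obtain ⟨t, ⟨r, hrR, rfl⟩, hta⟩ := hg _ ⟨B, hB, rfl⟩
      exact ⟨r, hrR, fun a ha => hta a ha⟩
    choose rB hrBR hrBg using key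
    -- block of each attribute in partition Y
    choose blk hblk using fun a => hY.2 a
    -- per-block chosen row
    set s : Set ι → ∀ a, V a := fun W =>
      if h : ∃ B, B ∈ X ∧ B ⊆ W then rB h.choose h.choose_spec.1 else r0 with hs
    have hsR : ∀ W, s W ∈ R := by
      intro W
      rw [hs]
      dsimp only
      split
      · exact hrBR _ _
      · exact hr0
    -- the completed row
    set h : ∀ a, V a := fun a => s (blk a) a with hh
    have hblkeq : ∀ a : ι, ∀ W ∈ Y, a ∈ W → blk a = W := by
      intro a W hW haW
      exact ((hblk a).2 W ⟨hW, haW⟩).symm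
    have hhR : h ∈ R := by
      rw [hYind]
      intro W hW
      refine ⟨s W, hsR W, fun a haW => ?_⟩
      rw [hh]
      dsimp only
      rw [hblkeq a W hW haW]
    refine ⟨h, hhR, ?_⟩
    funext a
    obtain ⟨B, hB, haB⟩ := a.2
    obtain ⟨W, hW, hBW⟩ := hXsub B hB
    have hblka : blk (a : ι) = W := hblkeq a W hW (hBW haB)
    have hex : ∃ B', B' ∈ X ∧ B' ⊆ blk (a : ι) := ⟨B, hB, hblka ▸ hBW⟩
    show s (blk (a : ι)) (a : ι) = g a
    rw [hs]
    dsimp only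
    rw [dif_pos hex]
    have hspec := hex.choose_spec
    have hBeq : hex.choose = B := by
      exact hXone W hW hex.choose hspec.1 B hB (hblka ▸ hspec.2) hBW
    exact hrBg hex.choose hspec.1 a (hBeq ▸ haB)
end

section
/- Mincors respect independent partitions: for every independent partition Y of S with respect to R and every mincor W of R, there exists a block Y' ∈ Y with W ⊆ Y'. In other words, no minimal self-correlated set of attributes intersects more than one block of an independent partition. -/
variable {ι : Type*} {V : ι → Type*}

theorem stmt11 [Fintype ι] [∀ a, Fintype (V a)]
    (R : Set (∀ a, V a)) (hR : IsRelation R)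
    (Y : Set (Set ι)) (hY : Setoid.IsPartition Y) (hYind : Independent R Y)
    (W : Set ι) (hW : Mincor R W) :
    ∃ Y' ∈ Y, W ⊆ Y' := by
  by_contra hcon
  push_neg at hcon
  obtain ⟨⟨g, hg1, hg2⟩, hmin⟩ := hW
  have key : ∀ B ∈ Y, ∃ t ∈ R, ∀ a ∈ W ∩ B, t a = g a := by
    intro B hB
    by_contra hk
    push_neg at hk
    have hcor : Correlated R (W ∩ B) := by
      refine ⟨g, fun a ha => hg1 a ha.1, fun t ht => ?_⟩
      obtain ⟨a, ha, hne⟩ := hk t ht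
      exact ⟨a, ha, hne⟩
    have heq := hmin (W ∩ B) Set.inter_subset_left hcor
    exact hcon B hB (fun a ha => (heq.symm ▸ ha : a ∈ W ∩ B).2)
  choose! f hfR hfa using key
  -- block of each a
  have hblk : ∀ a : ι, ∃! B, B ∈ Y ∧ a ∈ B := hY.2
  classical
  let blk : ι → Set ι := fun a => (hblk a).choose
  have blkY : ∀ a, blk a ∈ Y := fun a => (hblk a).choose_spec.1.1
  have blkmem : ∀ a, a ∈ blk a := fun a => (hblk a).choose_spec.1.2
  have blkuniq : ∀ a B, B ∈ Y → a ∈ B → B = blk a :=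
    fun a B hB haB => (hblk a).choose_spec.2 B ⟨hB, haB⟩
  let h : ∀ a, V a := fun a => f (blk a) (blkY a) a
  have hh : h ∈ R := by
    rw [hYind]
    intro B hB
    refine ⟨f B hB, hfR B hB, fun a haB => ?_⟩
    show f B hB a = f (blk a) (blkY a) a
    have e := blkuniq a B hB haB
    subst e
    rfl
  obtain ⟨a, haW, hne⟩ := hg2 h hh
  exact hne (hfa (blk a) (blkY a) a ⟨haW, blkmem a⟩)
end

section
/- The partition of S obtained by taking the connected components of the mincor family of R refines every independent partition of S with respect to R. -/
variable {ι : Type*} {V : ι → Type*}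

theorem mincor_subset_block' (R : Set (∀ a, V a)) (X : Set (Set ι))
    (hX : Setoid.IsPartition X) (hXind : Independent R X)
    (T : Set ι) (hT : Mincor R T) : ∃ C ∈ X, T ⊆ C := by
  obtain ⟨⟨g, hg1, hg2⟩, hmin⟩ := hT
  by_cases h : ∃ C ∈ X, Correlated R (T ∩ C)
  · obtain ⟨C, hC, hcor⟩ := h
    have heq := hmin (T ∩ C) Set.inter_subset_left hcor
    exact ⟨C, hC, by rw [← heq]; exact Set.inter_subset_right⟩
  · push_neg at h
    exfalso
    have ht : ∀ C ∈ X, ∃ t ∈ R, ∀ a ∈ T ∩ C, t a = g a := by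
      intro C hC
      by_contra hno
      push_neg at hno
      refine h C hC ⟨g, fun a ha => hg1 a ha.1, fun t htR => ?_⟩
      obtain ⟨a, ha, hne⟩ := hno t htR
      exact ⟨a, ha, hne⟩
    choose t htR hta using ht
    choose blk hblk using fun a => (hX.2 a).exists
    have hblkX : ∀ a, blk a ∈ X := fun a => (hblk a).1
    have hmem : ∀ a, a ∈ blk a := fun a => (hblk a).2
    set H : ∀ a, V a := fun a => t (blk a) (hblkX a) a with hH
    have hHR : H ∈ R := by
      rw [hXind]
      intro Y hY
      refine ⟨t Y hY, htR Y hY, fun a haY => ?_⟩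
      have : Y = blk a := by
        obtain ⟨E, _, hEu⟩ := hX.2 a
        rw [hEu Y ⟨hY, haY⟩, hEu (blk a) ⟨hblkX a, hmem a⟩]
      subst this
      rfl
    obtain ⟨a, haT, hne⟩ := hg2 H hHR
    exact hne (hta (blk a) (hblkX a) a ⟨haT, hmem a⟩)

theorem mf_subset_block' (R : Set (∀ a, V a)) (X : Set (Set ι))
    (hX : Setoid.IsPartition X) (hXind : Independent R X)
    (T : Set ι) (hT : T ∈ MF R) : ∃ C ∈ X, T ⊆ C := by
  rcases hT with hT | ⟨a, rfl, _⟩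
  · exact mincor_subset_block' R X hX hXind T hT
  · obtain ⟨C, ⟨hCX, haC⟩, _⟩ := hX.2 a
    exact ⟨C, hCX, by simpa using haC⟩

theorem stmt12 [Fintype ι] [∀ a, Fintype (V a)]
    (R : Set (∀ a, V a)) (hR : IsRelation R)
    (X : Set (Set ι)) (hX : Setoid.IsPartition X) (hXind : Independent R X) :
    Refines (Set.range (ccBlock (MF R))) X := by
  intro B hB
  obtain ⟨a, rfl⟩ := hB
  obtain ⟨C, ⟨hCX, haC⟩, _⟩ := hX.2 a
  refine ⟨C, hCX, fun b hb => ?_⟩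
  have key : ∀ x y, Relation.EqvGen (fun x y => ∃ T ∈ MF R, x ∈ T ∧ y ∈ T) x y →
      (x ∈ C ↔ y ∈ C) := by
    intro x y hxy
    induction hxy with
    | rel x y hrel =>
        obtain ⟨T, hTF, hxT, hyT⟩ := hrel
        obtain ⟨D, hDX, hTD⟩ := mf_subset_block' R X hX hXind T hTF
        constructor
        · intro hx
          obtain ⟨E, _, hEu⟩ := hX.2 x
          have : D = C := by rw [hEu D ⟨hDX, hTD hxT⟩, hEu C ⟨hCX, hx⟩]
          exact this ▸ hTD hyT
        · intro hy
          obtain ⟨E, _, hEu⟩ := hX.2 y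
          have : D = C := by rw [hEu D ⟨hDX, hTD hyT⟩, hEu C ⟨hCX, hy⟩]
          exact this ▸ hTD hxT
    | refl x => exact Iff.rfl
    | symm x y _ ih => exact ih.symm
    | trans x y z _ _ ih1 ih2 => exact ih1.trans ih2
  exact (key a b hb).mp haC
end

section
/- The meet (in the refinement lattice of partitions) of two independent partitions of S with respect to R is again an independent partition: if X and Y are independent, then the partition {B ∩ C | B ∈ X, C ∈ Y} \ {∅} is independent. -/
variable {ι : Type*} {V : ι → Type*}

theorem stmt14 [Fintype ι] [∀ a, Fintype (V a)]
    (R : Set (∀ a, V a)) (hR : IsRelation R)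
    (X Y : Set (Set ι)) (hX : Setoid.IsPartition X) (hY : Setoid.IsPartition Y)
    (hXind : Independent R X) (hYind : Independent R Y) :
    Independent R ({D | ∃ B ∈ X, ∃ C ∈ Y, D = B ∩ C} \ {∅}) := by
  classical
  obtain ⟨t0, ht0⟩ := hR.1
  rw [Independent] at hXind hYind ⊢
  ext g
  simp only [Set.mem_setOf_eq]
  constructor
  · intro hg D _
    exact ⟨g, hg, fun a _ => rfl⟩
  · intro hg
    rw [hXind]
    simp only [Set.mem_setOf_eq]
    intro B hB
    have hex : ∀ a, ∃ C, (C ∈ Y ∧ a ∈ C) ∧ ∀ C', C' ∈ Y → a ∈ C' → C' = C := by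
      intro a
      obtain ⟨C, hC, hu⟩ := hY.2 a
      exact ⟨C, hC, fun C' h1 h2 => hu C' ⟨h1, h2⟩⟩
    choose Cb hCb hCbu using hex
    have hex2 : ∀ C : Set ι, ∃ t, t ∈ R ∧
        ((C ∈ Y ∧ (B ∩ C).Nonempty) → ∀ a ∈ B ∩ C, t a = g a) := by
      intro C
      by_cases h : C ∈ Y ∧ (B ∩ C).Nonempty
      · obtain ⟨t, ht, hta⟩ := hg (B ∩ C)
          ⟨⟨B, hB, C, h.1, rfl⟩, by
            simpa [Set.mem_singleton_iff] using h.2.ne_empty⟩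
        exact ⟨t, ht, fun _ => hta⟩
      · exact ⟨t0, ht0, fun h' => absurd h' h⟩
    choose tC htCR htCa using hex2
    set u : ∀ a, V a := fun a => tC (Cb a) a with hu
    have huR : u ∈ R := by
      rw [hYind]
      simp only [Set.mem_setOf_eq]
      intro C hC
      refine ⟨tC C, htCR C, fun a ha => ?_⟩
      have hCa : Cb a = C := (hCbu a C hC ha).symm
      simp [hu, hCa]
    refine ⟨u, huR, fun a ha => ?_⟩
    have h1 : a ∈ B ∩ Cb a := ⟨ha, (hCb a).2⟩
    have := htCa (Cb a) ⟨(hCb a).1, ⟨a, h1⟩⟩ a h1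
    simpa [hu] using this
end

section
/- A partition X of S is an independent partition with respect to R if and only if it is a fixed point of the transformer α, i.e., α(X) = X. -/
variable {ι : Type*} {V : ι → Type*}

lemma eqvGen_eq_of_le_eq {α : Type*} {r : α → α → Prop} (h : ∀ x y, r x y → x = y)
    {a b : α} (hab : Relation.EqvGen r a b) : a = b := by
  induction hab with
  | rel x y h' => exact h x y h'
  | refl => rfl
  | symm x y _ ih => exact ih.symm
  | trans x y z _ _ ih1 ih2 => exact ih1.trans ih2

lemma indep_no_correlated (R : Set (∀ a, V a)) (hR : IsRelation R)
    (X : Set (Set ι)) (hX : Setoid.IsPartition X)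
    (hI : Independent R X) (T : Set X) : ¬ Correlated (quotRel R X) T := by
  classical
  rintro ⟨g, hg1, hg2⟩
  obtain ⟨r, hr⟩ := hR.1
  set h : ∀ a, V a := fun a =>
    if H : ∃ Y : X, Y ∈ T ∧ a ∈ (Y : Set ι) then g H.choose ⟨a, H.choose_spec.2⟩ else r a
    with hh
  have hmemblock : ∀ (Y : X), Y ∈ T → ∀ (a : ι) (ha : a ∈ (Y : Set ι)),
      h a = g Y ⟨a, ha⟩ := by
    intro Y hY a ha
    have H : ∃ Y : X, Y ∈ T ∧ a ∈ (Y : Set ι) := ⟨Y, hY, ha⟩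
    have hch := H.choose_spec
    have huniq : H.choose = Y :=
      Subtype.ext ((hX.2 a).unique ⟨H.choose.2, hch.2⟩ ⟨Y.2, ha⟩)
    have key : ∀ (Z : X) (hZ : a ∈ (Z : Set ι)), Z = Y → g Z ⟨a, hZ⟩ = g Y ⟨a, ha⟩ := by
      rintro Z hZ rfl; rfl
    simp only [hh, dif_pos H]
    exact key H.choose hch.2 huniq
  have hhR : h ∈ R := by
    rw [hI]
    intro Y hY
    by_cases hYT : (⟨Y, hY⟩ : X) ∈ T
    · obtain ⟨t, ht, htg⟩ := hg1 ⟨Y, hY⟩ hYT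
      obtain ⟨r', hr', rfl⟩ := ht
      refine ⟨r', hr', fun a ha => ?_⟩
      have h1 : r' a = g ⟨Y, hY⟩ ⟨a, ha⟩ := congrFun htg ⟨a, ha⟩
      rw [h1, hmemblock ⟨Y, hY⟩ hYT a ha]
    · refine ⟨r, hr, fun a ha => ?_⟩
      have H : ¬ ∃ Z : X, Z ∈ T ∧ a ∈ (Z : Set ι) := by
        rintro ⟨Z, hZT, hZa⟩
        have h1 : (Z : Set ι) = Y := (hX.2 a).unique ⟨Z.2, hZa⟩ ⟨hY, ha⟩
        have h2 : Z = (⟨Y, hY⟩ : X) := Subtype.ext h1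
        exact hYT (h2 ▸ hZT)
      simp only [hh, dif_neg H]
  obtain ⟨Y, hYT, hne⟩ := hg2 (fun Y a => h a) ⟨h, hhR, rfl⟩
  exact hne (funext fun a => hmemblock Y hYT a.1 a.2)

theorem stmt17 [Fintype ι] [∀ a, Fintype (V a)]
    (R : Set (∀ a, V a)) (hR : IsRelation R)
    (X : Set (Set ι)) (hX : Setoid.IsPartition X) :
    Independent R X ↔ alphaT R X = X := by
  constructor
  · intro hI
    have hnc := indep_no_correlated R hR X hX hI
    have hMF : MF (quotRel R X) = {T | ∃ a : X, T = {a}} := by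
      ext T
      simp only [MF, Set.mem_union, Set.mem_setOf_eq]
      constructor
      · rintro (⟨hc, _⟩ | ⟨a, ha, _⟩)
        · exact absurd hc (hnc T)
        · exact ⟨a, ha⟩
      · rintro ⟨a, rfl⟩
        exact Or.inr ⟨a, rfl, fun T' hT' => absurd hT'.1 (hnc T')⟩
    have hcc : ∀ Y : X, ccBlock (MF (quotRel R X)) Y = {Y} := by
      intro Y
      ext Z
      simp only [ccBlock, Set.mem_setOf_eq, Set.mem_singleton_iff]
      constructor
      · intro h
        refine (eqvGen_eq_of_le_eq (fun x y hxy => ?_) h).symm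
        obtain ⟨T, hT, hx, hy⟩ := hxy
        rw [hMF] at hT
        obtain ⟨a, rfl⟩ := hT
        rw [Set.mem_singleton_iff] at hx hy
        rw [hx, hy]
      · rintro rfl
        exact Relation.EqvGen.refl _
    unfold alphaT
    simp only [hcc]
    have heq : (fun Y : X => ⋃ Z ∈ ({Y} : Set X), (Z : Set ι)) = fun Y : X => (Y : Set ι) := by
      funext Y; simp
    rw [heq, Subtype.range_coe]
  · intro hA
    classical
    by_contra hI
    have hsub : R ⊆ {g | ∀ Y ∈ X, ∃ t ∈ R, ∀ a ∈ Y, t a = g a} :=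
      fun t ht Y _ => ⟨t, ht, fun a _ => rfl⟩
    have hex : ∃ g, g ∈ {g | ∀ Y ∈ X, ∃ t ∈ R, ∀ a ∈ Y, t a = g a} ∧ g ∉ R := by
      by_contra h
      push_neg at h
      exact hI (Set.Subset.antisymm hsub h)
    obtain ⟨g, hgJ, hgR⟩ := hex
    have hcorr : Correlated (quotRel R X) Set.univ := by
      refine ⟨fun Y a => g a, ?_, ?_⟩
      · intro Y _
        obtain ⟨t, ht, hta⟩ := hgJ Y.1 Y.2
        exact ⟨fun Z a => t a, ⟨t, ht, rfl⟩, funext fun a => hta a.1 a.2⟩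
      · rintro t ⟨r', hr', rfl⟩
        by_contra h
        push_neg at h
        apply hgR
        have hrg : r' = g := by
          funext a
          obtain ⟨B, ⟨hB, haB⟩, _⟩ := hX.2 a
          have h1 := h ⟨B, hB⟩ (Set.mem_univ _)
          exact congrFun h1 ⟨a, haB⟩
        rwa [← hrg]
    have hfin : Finite X := inferInstance
    have hwf : WellFounded ((· < ·) : Set X → Set X → Prop) :=
      (Finite.to_wellFoundedLT).wf
    obtain ⟨T₀, hT₀c, hmin⟩ := hwf.has_min {T | Correlated (quotRel R X) T} ⟨Set.univ, hcorr⟩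
    have hMin : Mincor (quotRel R X) T₀ := by
      refine ⟨hT₀c, fun T' hsub' hc' => ?_⟩
      by_contra hne
      exact hmin T' hc' (lt_of_le_of_ne hsub' hne)
    have hQne : (quotRel R X).Nonempty := hR.1.image _
    have hT₀ne : T₀.Nonempty := by
      rcases Set.eq_empty_or_nonempty T₀ with rfl | h
      · obtain ⟨gc, _, hg2⟩ := hT₀c
        obtain ⟨t, ht⟩ := hQne
        obtain ⟨a, ha, _⟩ := hg2 t ht
        exact absurd ha (Set.notMem_empty a)
      · exact h
    obtain ⟨Y₁, hY₁⟩ := hT₀ne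
    have hex2 : ∃ Y₂ ∈ T₀, Y₂ ≠ Y₁ := by
      by_contra h
      push_neg at h
      obtain ⟨gc, hg1, hg2⟩ := hT₀c
      obtain ⟨t, ht, hteq⟩ := hg1 Y₁ hY₁
      obtain ⟨a, ha, hne'⟩ := hg2 t ht
      rw [h a ha] at hne'
      exact hne' hteq
    obtain ⟨Y₂, hY₂, hY21⟩ := hex2
    have hB : (⋃ Z ∈ ccBlock (MF (quotRel R X)) Y₁, (Z : Set ι)) ∈ X := by
      have hm : (⋃ Z ∈ ccBlock (MF (quotRel R X)) Y₁, (Z : Set ι)) ∈ alphaT R X := ⟨Y₁, rfl⟩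
      rwa [hA] at hm
    have h1 : (Y₁ : Set ι) ⊆ ⋃ Z ∈ ccBlock (MF (quotRel R X)) Y₁, (Z : Set ι) :=
      Set.subset_biUnion_of_mem (Relation.EqvGen.refl Y₁)
    have h2 : (Y₂ : Set ι) ⊆ ⋃ Z ∈ ccBlock (MF (quotRel R X)) Y₁, (Z : Set ι) :=
      Set.subset_biUnion_of_mem
        (Relation.EqvGen.rel _ _ ⟨T₀, Set.mem_union_left _ hMin, hY₁, hY₂⟩)
    have hY₁ne : (Y₁ : Set ι).Nonempty :=
      Set.nonempty_iff_ne_empty.2 (fun h => hX.1 (h ▸ Y₁.2))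
    obtain ⟨b, hb⟩ := hY₁ne
    have hBY₁ : (⋃ Z ∈ ccBlock (MF (quotRel R X)) Y₁, (Z : Set ι)) = (Y₁ : Set ι) :=
      (hX.2 b).unique ⟨hB, h1 hb⟩ ⟨Y₁.2, hb⟩
    have hY₂ne : (Y₂ : Set ι).Nonempty :=
      Set.nonempty_iff_ne_empty.2 (fun h => hX.1 (h ▸ Y₂.2))
    obtain ⟨a, ha⟩ := hY₂ne
    have hfin2 : (Y₂ : Set ι) = (Y₁ : Set ι) :=
      (hX.2 a).unique ⟨Y₂.2, ha⟩ ⟨Y₁.2, hBY₁ ▸ h2 ha⟩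
    exact hY21 (Subtype.ext hfin2)
end

section
/- The down-set of the focus is closed under α: for every partition X of S refining FOC(R), the partition α(X) also refines FOC(R). Moreover, for every mincor T of the quotient relation R/X with X ⊑ FOC(R), the union ∪T is contained in a single block of FOC(R). -/
variable {ι : Type*} {V : ι → Type*}

theorem stmt18 [Fintype ι] [∀ a, Fintype (V a)]
    (R : Set (∀ a, V a)) (hR : IsRelation R)
    (foc : Set (Set ι)) (hfocP : Setoid.IsPartition foc)
    (hfocI : Independent R foc)
    (hfocL : ∀ X : Set (Set ι), Setoid.IsPartition X → Independent R X →
      Refines foc X) :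
    (∀ X : Set (Set ι), Setoid.IsPartition X → Refines X foc →
      Refines (alphaT R X) foc) ∧
    (∀ X : Set (Set ι), Setoid.IsPartition X → Refines X foc →
      ∀ T : Set X, Mincor (quotRel R X) T →
        ∃ B ∈ foc, (⋃ Z ∈ T, (Z : Set ι)) ⊆ B) := by
  classical
  obtain ⟨t0, ht0⟩ := hR.1
  have huniq : ∀ a : ι, ∀ B ∈ foc, ∀ C ∈ foc, a ∈ B → a ∈ C → B = C := by
    intro a B hB C hC haB haC
    obtain ⟨D, hD, hDu⟩ := hfocP.2 a
    rw [hDu B ⟨hB, haB⟩, hDu C ⟨hC, haC⟩]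
  choose ψ hψfoc hψmem using fun a : ι => (hfocP.2 a).exists
  have key : ∀ X : Set (Set ι), Setoid.IsPartition X → Refines X foc →
      ∀ T : Set X, Mincor (quotRel R X) T →
        ∃ B ∈ foc, (⋃ Z ∈ T, (Z : Set ι)) ⊆ B := by
    intro X hXP hXR T hT
    have hblk : ∀ Y : X, ∃ B, B ∈ foc ∧ (Y : Set ι) ⊆ B := fun Y => by
      obtain ⟨B, hB, hsub⟩ := hXR Y Y.2; exact ⟨B, hB, hsub⟩
    choose φ hφfoc hφsub using hblk
    have hYne : ∀ Y : X, (Y : Set ι).Nonempty := fun Y =>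
      Set.nonempty_iff_ne_empty.2 (fun h => hXP.1 (h ▸ Y.2))
    have hTne : T.Nonempty := by
      by_contra h
      rw [Set.not_nonempty_iff_eq_empty] at h
      obtain ⟨g, _, hg2⟩ := hT.1
      obtain ⟨Y, hY, _⟩ := hg2 (fun (Z : X) (a : (Z : Set ι)) => t0 a) ⟨t0, ht0, rfl⟩
      simp [h] at hY
    obtain ⟨Y0, hY0⟩ := hTne
    refine ⟨φ Y0, hφfoc Y0, ?_⟩
    have hall : ∀ Y ∈ T, φ Y = φ Y0 := by
      by_contra hcon
      push_neg at hcon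
      obtain ⟨Y1, hY1, hne1⟩ := hcon
      obtain ⟨g, hg1, hg2⟩ := hT.1
      have hsB : ∀ B : Set ι, ∃ s ∈ R,
          ∀ Y ∈ T, φ Y = B → (fun (Z : X) (a : (Z : Set ι)) => s a) Y = g Y := by
        intro B
        by_cases hBne : ∃ Y ∈ T, φ Y = B
        · have hproper : {Y | Y ∈ T ∧ φ Y = B} ≠ T := by
            intro h
            have h0 : φ Y0 = B := by
              have := h.symm ▸ hY0
              exact this.2
            have h1 : φ Y1 = B := by
              have := h.symm ▸ hY1
              exact this.2
            exact hne1 (h1.trans h0.symm)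
          have hnc : ¬ Correlated (quotRel R X) {Y | Y ∈ T ∧ φ Y = B} := fun hc =>
            hproper (hT.2 _ (fun Y hY => hY.1) hc)
          rw [Correlated] at hnc
          push_neg at hnc
          obtain ⟨t, ht, hmatch⟩ := hnc g (fun Y hY => hg1 Y hY.1)
          obtain ⟨s, hs, rfl⟩ := ht
          exact ⟨s, hs, fun Y hYT hYB => hmatch Y ⟨hYT, hYB⟩⟩
        · push_neg at hBne
          exact ⟨t0, ht0, fun Y hY hB => absurd hB (hBne Y hY)⟩
      choose sB hsBR hsBmatch using hsB
      have hhR : (fun a => sB (ψ a) a) ∈ R := by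
        rw [hfocI]
        intro B hB
        refine ⟨sB B, hsBR B, fun a ha => ?_⟩
        have h' : ψ a = B := huniq a (ψ a) (hψfoc a) B hB (hψmem a) ha
        show sB B a = sB (ψ a) a
        rw [h']
      obtain ⟨Y, hYT, hYne'⟩ := hg2 _ ⟨_, hhR, rfl⟩
      apply hYne'
      funext a
      have hψa : ψ (a : ι) = φ Y := huniq a (ψ a) (hψfoc a) (φ Y) (hφfoc Y)
        (hψmem a) (hφsub Y a.2)
      show sB (ψ (a : ι)) (a : ι) = g Y a
      rw [hψa]
      exact congrFun (hsBmatch (φ Y) Y hYT rfl) a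
    intro a ha
    simp only [Set.mem_iUnion] at ha
    obtain ⟨Z, hZT, haZ⟩ := ha
    exact (hall Z hZT) ▸ hφsub Z haZ
  refine ⟨?_, key⟩
  intro X hXP hXR B' hB'
  obtain ⟨Y0, rfl⟩ := hB'
  have hblk : ∀ Y : X, ∃ B, B ∈ foc ∧ (Y : Set ι) ⊆ B := fun Y => by
    obtain ⟨B, hB, hsub⟩ := hXR Y Y.2; exact ⟨B, hB, hsub⟩
  choose φ hφfoc hφsub using hblk
  have hYne : ∀ Y : X, (Y : Set ι).Nonempty := fun Y =>
    Set.nonempty_iff_ne_empty.2 (fun h => hXP.1 (h ▸ Y.2))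
  have hφuniq : ∀ (Y : X) (B : Set ι), B ∈ foc → (Y : Set ι) ⊆ B → φ Y = B := by
    intro Y B hB hsub
    obtain ⟨a, ha⟩ := hYne Y
    exact huniq a (φ Y) (hφfoc Y) B hB (hφsub Y ha) (hsub ha)
  have hrel : ∀ Y Z : X, (∃ T ∈ MF (quotRel R X), Y ∈ T ∧ Z ∈ T) → φ Y = φ Z := by
    rintro Y Z ⟨T, hTF, hYT, hZT⟩
    rcases hTF with hTm | ⟨a, rfl, _⟩
    · obtain ⟨B, hB, hsub⟩ := key X hXP hXR T hTm
      have hY : φ Y = B := hφuniq Y B hB (fun x hx => hsub (Set.mem_biUnion hYT hx))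
      have hZ : φ Z = B := hφuniq Z B hB (fun x hx => hsub (Set.mem_biUnion hZT hx))
      rw [hY, hZ]
    · rw [Set.mem_singleton_iff] at hYT hZT
      rw [hYT, hZT]
  have hcc : ∀ x y : X, Relation.EqvGen
      (fun a b => ∃ T ∈ MF (quotRel R X), a ∈ T ∧ b ∈ T) x y → φ x = φ y := by
    intro x y h
    induction h with
    | rel a b hab => exact hrel a b hab
    | refl a => rfl
    | symm a b _ ih => exact ih.symm
    | trans a b c _ _ ih1 ih2 => exact ih1.trans ih2
  refine ⟨φ Y0, hφfoc Y0, ?_⟩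
  intro a ha
  simp only [Set.mem_iUnion] at ha
  obtain ⟨Z, hZ, haZ⟩ := ha
  have : φ Z = φ Y0 := (hcc Y0 Z hZ).symm
  exact this ▸ hφsub Z haZ
end
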